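/- Moment comparison used in the rounding analysis: let X_1, …, X_n be independent random variables with X_j taking value a_j ≥ 0 with probability q_j and 0 otherwise, and let S = ∑_j X_j. Then for any integer p ≥ 1, E[S^p] ≤ (p)^p · max((∑_j q_j a_j)^p, ∑_j q_j a_j^p) up to a constant factor; in particular E[S^p] ≤ 2^p · p^p · ((∑_j q_j a_j)^p + ∑_j q_j a_j^p). -/

import Mathlib

/-!
Write `m r = E[S ^ r]` and `τ k = ∑ j, E[X j ^ k] = ∑ j, q j * a j ^ k`. Expanding
`E[X j * S ^ r]` binomially in `S = X j + (S - X j)` and using independence gives the weighted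
Bell-number recursion `m (r + 1) ≤ ∑ t, r.choose t * τ (t + 1) * m (r - t)`. With
`N = τ 1 + (τ p) ^ (1 / p)` one has `τ k ≤ N ^ k` for `1 ≤ k ≤ p` (compare each `a j` with `N`),
so induction gives `m r ≤ r ^ r * N ^ r`, and `N ^ p ≤ 2 ^ (p - 1) * (τ 1 ^ p + τ p)`.
Working with lower Lebesgue integrals of `ℝ≥0∞`-valued variables removes all integrability
side conditions.
-/

open MeasureTheory ProbabilityTheory Finset
open scoped ENNReal

theorem pow_mul_pow_sub_le {b N : ℝ} (hb : 0 ≤ b) (hN : 0 ≤ N) {k p : ℕ} (hk : 1 ≤ k)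
    (hkp : k ≤ p) : b ^ k * N ^ (p - k) ≤ b * N ^ (p - 1) + b ^ p := by
  rcases le_total b N with hbN | hNb
  · calc b ^ k * N ^ (p - k) = b * (b ^ (k - 1) * N ^ (p - k)) := by
          rw [← mul_assoc, ← pow_succ', Nat.sub_add_cancel hk]
      _ ≤ b * (N ^ (k - 1) * N ^ (p - k)) := by gcongr
      _ = b * N ^ (p - 1) := by rw [← pow_add]; congr 2; omega
      _ ≤ b * N ^ (p - 1) + b ^ p := le_add_of_nonneg_right (pow_nonneg hb p)
  · calc b ^ k * N ^ (p - k) ≤ b ^ k * b ^ (p - k) := by gcongr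
      _ = b ^ p := by rw [← pow_add, Nat.add_sub_cancel' hkp]
      _ ≤ b * N ^ (p - 1) + b ^ p := le_add_of_nonneg_left (by positivity)

theorem sum_mul_pow_le_add_pow {ι : Type*} (s : Finset ι) {w b : ι → ℝ}
    (hw : ∀ j ∈ s, 0 ≤ w j) (hb : ∀ j ∈ s, 0 ≤ b j) {c : ℝ} (hc : 0 ≤ c) {k p : ℕ}
    (hk : 1 ≤ k) (hkp : k ≤ p) (hp : ∑ j ∈ s, w j * b j ^ p ≤ c ^ p) :
    ∑ j ∈ s, w j * b j ^ k ≤ (∑ j ∈ s, w j * b j + c) ^ k := by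
  set M := ∑ j ∈ s, w j * b j
  have hM : 0 ≤ M := sum_nonneg fun j hj => mul_nonneg (hw j hj) (hb j hj)
  rcases (add_nonneg hM hc).eq_or_lt with hN | hN
  · have hwb : ∀ j ∈ s, w j * b j = 0 :=
      (sum_eq_zero_iff_of_nonneg fun j hj => mul_nonneg (hw j hj) (hb j hj)).1
        (by linarith)
    rw [← hN, zero_pow (by omega)]
    refine (sum_eq_zero fun j hj => ?_).le
    rw [← Nat.sub_add_cancel hk, pow_succ, ← mul_assoc, mul_right_comm, hwb j hj, zero_mul]
  set N := M + c
  refine le_of_mul_le_mul_right ?_ (pow_pos hN (p - k))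
  calc (∑ j ∈ s, w j * b j ^ k) * N ^ (p - k)
      ≤ ∑ j ∈ s, w j * (b j * N ^ (p - 1) + b j ^ p) := by
        rw [sum_mul]
        refine sum_le_sum fun j hj => ?_
        rw [mul_assoc]
        exact mul_le_mul_of_nonneg_left (pow_mul_pow_sub_le (hb j hj) hN.le hk hkp) (hw j hj)
    _ = M * N ^ (p - 1) + ∑ j ∈ s, w j * b j ^ p := by
        simp only [mul_add, sum_add_distrib, M, sum_mul, mul_assoc]
    _ ≤ M * N ^ (p - 1) + c * N ^ (p - 1) := by
        gcongr
        calc _ ≤ c ^ p := hp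
          _ = c * c ^ (p - 1) := by rw [← pow_succ', Nat.sub_add_cancel (hk.trans hkp)]
          _ ≤ c * N ^ (p - 1) := by gcongr; linarith
    _ = N ^ k * N ^ (p - k) := by
        rw [← add_mul, ← pow_succ', ← pow_add]; congr 1; omega

theorem Nat.sum_choose_mul_sub_pow_sub_le (r : ℕ) :
    ∑ t ∈ range (r + 1), r.choose t * (r - t) ^ (r - t) ≤ (r + 1) ^ (r + 1) :=
  calc ∑ t ∈ range (r + 1), r.choose t * (r - t) ^ (r - t)
      ≤ ∑ t ∈ range (r + 1), 1 ^ t * r ^ (r - t) * r.choose t := by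
        refine sum_le_sum fun t ht => ?_
        rw [one_pow, one_mul, mul_comm]
        gcongr
        omega
    _ = (1 + r) ^ r := (add_pow 1 r r).symm
    _ ≤ (r + 1) ^ (r + 1) := by rw [add_comm]; exact Nat.pow_le_pow_right (by omega) (by omega)

theorem ENNReal.le_self_pow_mul_pow_of_le_sum_choose {m τ : ℕ → ℝ≥0∞} {N : ℝ≥0∞} {p : ℕ}
    (h0 : m 0 ≤ 1) (hτ : ∀ k, 1 ≤ k → k ≤ p → τ k ≤ N ^ k)
    (hrec : ∀ r < p, m (r + 1) ≤ ∑ t ∈ range (r + 1), r.choose t * τ (t + 1) * m (r - t)) :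
    ∀ r ≤ p, m r ≤ r ^ r * N ^ r := by
  intro r
  induction r using Nat.strong_induction_on with
  | _ r ih =>
    intro hrp
    rcases r with _ | r
    · simpa using h0
    calc m (r + 1) ≤ ∑ t ∈ range (r + 1), r.choose t * τ (t + 1) * m (r - t) := hrec r hrp
      _ ≤ ∑ t ∈ range (r + 1),
            r.choose t * N ^ (t + 1) * (↑(r - t) ^ (r - t) * N ^ (r - t)) := by
          refine sum_le_sum fun t ht => ?_
          have ht : t ≤ r := Nat.lt_succ_iff.1 (mem_range.1 ht)
          gcongr
          · exact hτ (t + 1) (by omega) (by omega)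
          · exact ih (r - t) (by omega) (by omega)
      _ = ↑(∑ t ∈ range (r + 1), r.choose t * (r - t) ^ (r - t)) * N ^ (r + 1) := by
          push_cast
          rw [sum_mul]
          refine sum_congr rfl fun t ht => ?_
          have ht : t ≤ r := Nat.lt_succ_iff.1 (mem_range.1 ht)
          rw [show r + 1 = (t + 1) + (r - t) by omega, pow_add]
          ring
      _ ≤ ((r + 1 : ℕ) : ℝ≥0∞) ^ (r + 1) * N ^ (r + 1) := by
          gcongr
          exact_mod_cast Nat.sum_choose_mul_sub_pow_sub_le r

theorem lintegral_ofReal_pow_of_forall_eq_or_eq_zero {Ω : Type*} [MeasurableSpace Ω]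
    {μ : Measure Ω} {X : Ω → ℝ} {a : ℝ} (hX : Measurable X) (hval : ∀ ω, X ω = a ∨ X ω = 0)
    {k : ℕ} (hk : k ≠ 0) :
    ∫⁻ ω, ENNReal.ofReal (X ω) ^ k ∂μ = ENNReal.ofReal a ^ k * μ {ω | X ω = a} := by
  have hpt : (fun ω => ENNReal.ofReal (X ω) ^ k) =
      {ω | X ω = a}.indicator fun _ => ENNReal.ofReal a ^ k := by
    ext ω
    by_cases h : X ω = a
    · simp [h]
    · rw [Set.indicator_of_notMem (s := {ω | X ω = a}) h, (hval ω).resolve_left h]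
      simp [hk]
  have hs : MeasurableSet {ω | X ω = a} := hX (measurableSet_singleton a)
  rw [hpt, lintegral_indicator_const hs]

namespace ProbabilityTheory

variable {Ω ι : Type*} [MeasurableSpace Ω] {μ : Measure Ω} [Fintype ι] {Y : ι → Ω → ℝ≥0∞}

theorem iIndepFun.lintegral_mul_sum_pow_le (hY : iIndepFun Y μ) (hmeas : ∀ j, Measurable (Y j))
    (j : ι) (r : ℕ) :
    ∫⁻ ω, Y j ω * (∑ i, Y i ω) ^ r ∂μ ≤
      ∑ t ∈ range (r + 1), r.choose t * (∫⁻ ω, Y j ω ^ (t + 1) ∂μ) *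
        ∫⁻ ω, (∑ i, Y i ω) ^ (r - t) ∂μ := by
  classical
  set R : Ω → ℝ≥0∞ := fun ω => ∑ i ∈ univ.erase j, Y i ω
  have hR : Measurable R := Finset.measurable_sum _ fun i _ => hmeas i
  have hindep : IndepFun (Y j) R μ := by
    simpa only [R, Finset.sum_fn] using
      (hY.indepFun_finsetSum_of_notMem hmeas (notMem_erase j univ)).symm
  have hsplit : ∀ ω, ∑ i, Y i ω = Y j ω + R ω := fun ω =>
    (add_sum_erase _ _ (mem_univ j)).symm
  calc ∫⁻ ω, Y j ω * (∑ i, Y i ω) ^ r ∂μ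
      = ∫⁻ ω, ∑ t ∈ range (r + 1), r.choose t * (Y j ω ^ (t + 1) * R ω ^ (r - t)) ∂μ := by
        refine lintegral_congr fun ω => ?_
        rw [hsplit, add_pow, mul_sum]
        refine sum_congr rfl fun t _ => ?_
        ring
    _ = ∑ t ∈ range (r + 1),
          r.choose t * (∫⁻ ω, Y j ω ^ (t + 1) ∂μ) * ∫⁻ ω, R ω ^ (r - t) ∂μ := by
        rw [lintegral_finsetSum _ fun t _ => by fun_prop]
        refine sum_congr rfl fun t _ => ?_
        have hpow : IndepFun (fun ω => Y j ω ^ (t + 1)) (fun ω => R ω ^ (r - t)) μ :=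
          hindep.comp (measurable_id.pow_const _) (measurable_id.pow_const _)
        rw [lintegral_const_mul _ (by fun_prop), mul_assoc,
          lintegral_mul_eq_lintegral_mul_lintegral_of_indepFun'' (by fun_prop) (by fun_prop) hpow]
    _ ≤ _ := by
        gcongr with t _ ω
        rw [hsplit]
        exact le_add_self

theorem iIndepFun.lintegral_sum_pow_succ_le (hY : iIndepFun Y μ) (hmeas : ∀ j, Measurable (Y j))
    (r : ℕ) :
    ∫⁻ ω, (∑ j, Y j ω) ^ (r + 1) ∂μ ≤
      ∑ t ∈ range (r + 1), r.choose t * (∑ j, ∫⁻ ω, Y j ω ^ (t + 1) ∂μ) *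
        ∫⁻ ω, (∑ j, Y j ω) ^ (r - t) ∂μ :=
  calc ∫⁻ ω, (∑ j, Y j ω) ^ (r + 1) ∂μ = ∑ j, ∫⁻ ω, Y j ω * (∑ i, Y i ω) ^ r ∂μ := by
        simp_rw [pow_succ', sum_mul]
        exact lintegral_finsetSum _ fun j _ => by fun_prop
    _ ≤ ∑ j, ∑ t ∈ range (r + 1), r.choose t * (∫⁻ ω, Y j ω ^ (t + 1) ∂μ) *
          ∫⁻ ω, (∑ i, Y i ω) ^ (r - t) ∂μ :=
        sum_le_sum fun j _ => hY.lintegral_mul_sum_pow_le hmeas j r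
    _ = _ := by
        rw [sum_comm]
        simp_rw [mul_sum, sum_mul]

theorem iIndepFun.lintegral_sum_pow_le [IsProbabilityMeasure μ] (hY : iIndepFun Y μ)
    (hmeas : ∀ j, Measurable (Y j)) {N : ℝ≥0∞} {p : ℕ}
    (hmom : ∀ k, 1 ≤ k → k ≤ p → ∑ j, ∫⁻ ω, Y j ω ^ k ∂μ ≤ N ^ k) :
    ∫⁻ ω, (∑ j, Y j ω) ^ p ∂μ ≤ p ^ p * N ^ p :=
  ENNReal.le_self_pow_mul_pow_of_le_sum_choose (m := fun r => ∫⁻ ω, (∑ j, Y j ω) ^ r ∂μ)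
    (by simp) hmom (fun r _ => hY.lintegral_sum_pow_succ_le hmeas r) p le_rfl

theorem iIndepFun.integral_sum_pow_le [IsProbabilityMeasure μ] {X : ι → Ω → ℝ}
    (hX : iIndepFun X μ) (hmeas : ∀ j, Measurable (X j)) (hX0 : ∀ j ω, 0 ≤ X j ω) {N : ℝ}
    (hN : 0 ≤ N) {p : ℕ}
    (hmom : ∀ k, 1 ≤ k → k ≤ p → ∑ j, ∫⁻ ω, ENNReal.ofReal (X j ω) ^ k ∂μ ≤ ENNReal.ofReal N ^ k) :
    ∫ ω, (∑ j, X j ω) ^ p ∂μ ≤ p ^ p * N ^ p := by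
  have hS : ∀ ω, 0 ≤ ∑ j, X j ω := fun ω => sum_nonneg fun j _ => hX0 j ω
  rw [integral_eq_lintegral_of_nonneg_ae (ae_of_all _ fun ω => pow_nonneg (hS ω) p)
    (by fun_prop)]
  refine ENNReal.toReal_le_of_le_ofReal (by positivity) ?_
  calc ∫⁻ ω, ENNReal.ofReal ((∑ j, X j ω) ^ p) ∂μ
      = ∫⁻ ω, (∑ j, ENNReal.ofReal (X j ω)) ^ p ∂μ := lintegral_congr fun ω => by
        rw [ENNReal.ofReal_pow (hS ω), ENNReal.ofReal_sum_of_nonneg fun j _ => hX0 j ω]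
    _ ≤ p ^ p * ENNReal.ofReal N ^ p :=
        (hX.comp _ fun _ => ENNReal.measurable_ofReal).lintegral_sum_pow_le
          (fun j => (hmeas j).ennreal_ofReal) hmom
    _ = ENNReal.ofReal (p ^ p * N ^ p) := by
        rw [ENNReal.ofReal_mul (by positivity), ENNReal.ofReal_pow hN,
          ENNReal.ofReal_pow (by positivity), ENNReal.ofReal_natCast]

end ProbabilityTheory

theorem moment_comparison {Ω : Type*} [MeasurableSpace Ω] (μ : Measure Ω)
    [IsProbabilityMeasure μ] (n : ℕ) (X : Fin n → Ω → ℝ)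
    (a q : Fin n → ℝ) (ha : ∀ j, 0 ≤ a j)
    (hq : ∀ j, 0 ≤ q j ∧ q j ≤ 1)
    (hmeas : ∀ j, Measurable (X j))
    (hindep : ProbabilityTheory.iIndepFun X μ)
    (hval : ∀ j ω, X j ω = a j ∨ X j ω = 0)
    (hdist : ∀ j, μ {ω | X j ω = a j} = ENNReal.ofReal (q j))
    (p : ℕ) (hp : 1 ≤ p) :
    ∫ ω, (∑ j, X j ω) ^ p ∂μ ≤
      2 ^ p * (p : ℝ) ^ p * ((∑ j, q j * a j) ^ p + ∑ j, q j * a j ^ p) := by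
  have hq0 : ∀ j, 0 ≤ q j := fun j => (hq j).1
  have hM : 0 ≤ ∑ j, q j * a j := sum_nonneg fun j _ => mul_nonneg (hq0 j) (ha j)
  have hT : 0 ≤ ∑ j, q j * a j ^ p :=
    sum_nonneg fun j _ => mul_nonneg (hq0 j) (pow_nonneg (ha j) p)
  obtain ⟨c, hc, hcp⟩ : ∃ c : ℝ, 0 ≤ c ∧ c ^ p = ∑ j, q j * a j ^ p :=
    ⟨_, Real.rpow_nonneg hT _, Real.rpow_inv_natCast_pow hT (by omega)⟩
  have hmom (k : ℕ) (hk : 1 ≤ k) (hkp : k ≤ p) :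
      ∑ j, ∫⁻ ω, ENNReal.ofReal (X j ω) ^ k ∂μ ≤ ENNReal.ofReal (∑ j, q j * a j + c) ^ k := by
    rw [← ENNReal.ofReal_pow (add_nonneg hM hc)]
    calc ∑ j, ∫⁻ ω, ENNReal.ofReal (X j ω) ^ k ∂μ = ENNReal.ofReal (∑ j, q j * a j ^ k) := by
          rw [ENNReal.ofReal_sum_of_nonneg fun j _ => mul_nonneg (hq0 j) (pow_nonneg (ha j) k)]
          refine sum_congr rfl fun j _ => ?_
          rw [lintegral_ofReal_pow_of_forall_eq_or_eq_zero (hmeas j) (hval j) (by omega), hdist,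
            ENNReal.ofReal_mul (hq0 j), ENNReal.ofReal_pow (ha j), mul_comm]
      _ ≤ _ := ENNReal.ofReal_le_ofReal <|
          sum_mul_pow_le_add_pow univ (fun j _ => hq0 j) (fun j _ => ha j) hc hk hkp hcp.ge
  have hX0 (j : Fin n) (ω : Ω) : 0 ≤ X j ω := by rcases hval j ω with h | h <;> simp [h, ha]
  calc ∫ ω, (∑ j, X j ω) ^ p ∂μ ≤ p ^ p * (∑ j, q j * a j + c) ^ p :=
        hindep.integral_sum_pow_le hmeas hX0 (add_nonneg hM hc) hmom
    _ ≤ p ^ p * (2 ^ (p - 1) * ((∑ j, q j * a j) ^ p + c ^ p)) := by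
        gcongr
        exact add_pow_le hM hc p
    _ ≤ 2 ^ p * (p : ℝ) ^ p * ((∑ j, q j * a j) ^ p + ∑ j, q j * a j ^ p) := by
        rw [hcp, mul_left_comm, ← mul_assoc]
        gcongr
        · norm_num
        · omega
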